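/- If g is a Bach-flat Kähler metric on a surface, then on the open set where s ≠ 0, the conformally rescaled metric h = s^{−2}g has vanishing trace-free Ricci tensor, i.e. is Einstein on that set. -/

import Mathlib

noncomputable section

open Matrix

/-- Pointwise curvature data of a Kähler surface `(M⁴, g, J)` in an orthonormal frame,
together with the trace-free Ricci tensor `r̊_h` of the conformally rescaled metric
`h = s⁻² g` on the set where `s ≠ 0`.  The field `ricci0_h_eq` records the conformal
transformation law `r̊ ↦ r̊ + 2u Hess₀(u⁻¹)` for `g ↦ u²g` in dimension four,
specialized to `u = s⁻¹`. -/
structure KahlerSurfaceConf where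
  M : Type
  [topM : TopologicalSpace M]
  /-- the scalar curvature `s` of the Kähler metric `g` -/
  s : M → ℝ
  /-- the components of the Hessian `∇∇s` in an orthonormal frame -/
  Hess_s : M → Matrix (Fin 4) (Fin 4) ℝ
  /-- the trace-free Ricci tensor `r̊` of `g` -/
  ricci0 : M → Matrix (Fin 4) (Fin 4) ℝ
  /-- the complex structure `J` -/
  J : M → Matrix (Fin 4) (Fin 4) ℝ
  J_sq : ∀ x, J x * J x = -1
  J_orth : ∀ x, (J x)ᵀ * J x = 1
  /-- the trace-free Ricci tensor of the conformally rescaled metric `h = s⁻²g` -/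
  ricci0_h : M → Matrix (Fin 4) (Fin 4) ℝ
  /-- the conformal transformation law of the trace-free Ricci tensor,
  for `h = u² g` with `u = s⁻¹` -/
  ricci0_h_eq : ∀ x, s x ≠ 0 → ricci0_h x =
    ricci0 x + (2 / s x) •
      (Hess_s x - ((Hess_s x).trace / 4) • (1 : Matrix (Fin 4) (Fin 4) ℝ))

attribute [instance] KahlerSurfaceConf.topM

namespace KahlerSurfaceConf

variable (X : KahlerSurfaceConf)

/-- The trace-free Hessian `Hess₀(s)`. -/
def Hess0 (x : X.M) : Matrix (Fin 4) (Fin 4) ℝ :=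
  X.Hess_s x - ((X.Hess_s x).trace / 4) • (1 : Matrix (Fin 4) (Fin 4) ℝ)

/-- The Kähler metric is extremal: `Hess(s)` is `J`-invariant. -/
def Extremal : Prop := ∀ x, (X.J x)ᵀ * X.Hess_s x * X.J x = X.Hess_s x

/-- A Kähler surface is Bach-flat iff it is extremal and `s r̊ + 2 Hess₀(s) = 0`. -/
def BachFlat : Prop :=
  X.Extremal ∧ ∀ x, X.s x • X.ricci0 x + (2 : ℝ) • X.Hess0 x = 0

end KahlerSurfaceConf

theorem add_div_smul_eq_zero_of_smul_add_smul_eq_zero {K V : Type*} [Field K] [AddCommGroup V]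
    [Module K V] {a b : K} {v w : V} (ha : a ≠ 0) (h : a • v + b • w = 0) :
    v + (b / a) • w = 0 := by
  have := congrArg (a⁻¹ • ·) h
  simpa only [smul_add, smul_smul, inv_mul_cancel₀ ha, one_smul, smul_zero, div_eq_inv_mul]
    using this

/-- If `g` is a Bach-flat Kähler metric on a surface, then on the open
set where `s ≠ 0` the conformally rescaled metric `h = s⁻²g` has vanishing trace-free
Ricci tensor, i.e. is Einstein on that set. -/
theorem bach_flat_conformal_einstein (X : KahlerSurfaceConf) (hBF : X.BachFlat) :
    ∀ x, X.s x ≠ 0 → X.ricci0_h x = 0 := by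
  intro x hs
  rw [X.ricci0_h_eq x hs]
  exact add_div_smul_eq_zero_of_smul_add_smul_eq_zero hs (hBF.2 x)
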